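/- Let d ∈ {0,…,n}, let e¹,…,eⁿ be a basis of ℝⁿ, let U = span{e¹,…,e^d}, let K = {e¹,…,eⁿ, -(1/(2n))∑ᵢeⁱ} and L = {-e^(d+1),…,-eⁿ, (1/(2n))∑ᵢeⁱ}. Then the point u = (1/(3n-d))∑_{i=1}^d eⁱ is the unique point of conv(K) ∩ conv(L) ∩ U, and for all proper subsets K' ⊆ K, L' ⊆ L with |K'| + |L'| < 2(n+1) - d one has conv(K') ∩ conv(L') ∩ U = ∅. -/

import Mathlib

/-!
Read off in the basis `e`, a convex combination of `L` that lies in `U` is forced: the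
coordinates `i ≥ d` give weight `τ / (2n)` to each `-eⁱ`, where `τ` is the weight of
`(1/(2n)) ∑ eⁱ`, and the weights summing to `1` give `τ = 2n / (3n - d)`. So the combination is
`u`, with all weights positive. Likewise every convex combination of `K` equal to `u` has all
weights positive: the weight `μ` of `-(1/(2n)) ∑ eⁱ` satisfies `d / (3n - d) + 3μ/2 = 1`. Hence
if `conv K' ∩ conv L' ∩ U` is nonempty, then `K' = K` and `L' = L`, and these have `n + 1` and
`n - d + 1` points.
-/

open Finset

lemma add_sum_smul_mem_convexHull {E ι : Type*} [AddCommGroup E] [Module ℝ E] {s : Set E}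
    {t : Finset ι} {a : E} {z : ι → E} {μ : ℝ} {c : ι → ℝ} (ha : a ∈ s) (hz : ∀ i ∈ t, z i ∈ s)
    (hμ : 0 ≤ μ) (hc : ∀ i ∈ t, 0 ≤ c i) (h1 : μ + ∑ i ∈ t, c i = 1) :
    μ • a + ∑ i ∈ t, c i • z i ∈ convexHull ℝ s := by
  have := (convex_convexHull ℝ s).sum_mem (t := insertNone t) (w := fun o => o.elim μ c)
    (z := fun o => o.elim a z)
    (by rintro (_ | i) hi; exacts [hμ, hc i (by simpa using hi)]) (by simpa using h1)
    (by rintro (_ | i) hi; exacts [subset_convexHull ℝ s ha,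
      subset_convexHull ℝ s (hz i (by simpa using hi))])
  simpa using this

lemma eq_of_mem_convexHull_of_weights_pos {E : Type*} [AddCommGroup E] [Module ℝ E]
    {s t : Finset E} {x : E} (hst : s ⊆ t) (hx : x ∈ convexHull ℝ (s : Set E))
    (hpos : ∀ w : E → ℝ, (∀ y ∈ t, 0 ≤ w y) → ∑ y ∈ t, w y = 1 → ∑ y ∈ t, w y • y = x →
      ∀ y ∈ t, 0 < w y) :
    s = t := by
  classical
  obtain ⟨w, hw0, hw1, hwx⟩ := mem_convexHull'.1 hx
  have hpos' := hpos (fun y => if y ∈ s then w y else 0)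
    (fun y _ => by split_ifs with hy; exacts [hw0 y hy, le_rfl])
    (by rw [sum_ite_mem, inter_eq_right.2 hst, hw1])
    (by simp only [ite_smul, zero_smul]; rw [sum_ite_mem, inter_eq_right.2 hst, hwx])
  exact hst.antisymm fun y hy => by_contra fun hys => (hpos' y hy).ne' (if_neg hys)

lemma Fin.card_filter_le_val {n d : ℕ} (hd : d ≤ n) : #{i : Fin n | d ≤ (i : ℕ)} = n - d := by
  have := card_filter_add_card_filter_not (s := (univ : Finset (Fin n)))
    (fun i : Fin n => (i : ℕ) < d)
  simp only [not_lt, Fin.card_filter_val_lt, card_univ, Fintype.card_fin, min_eq_right hd] at this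
  omega

namespace KirchbergerSharpness

variable {V : Type*} [AddCommGroup V] [Module ℝ V] {n : ℕ} (e : Module.Basis (Fin n) ℝ V) (d : ℕ)

noncomputable def halfCentroid : V := (1 / (2 * n : ℝ)) • ∑ i, e i

@[simp]
lemma repr_halfCentroid (j : Fin n) : e.repr (halfCentroid e) j = 1 / (2 * n : ℝ) := by
  simp [halfCentroid, map_sum, Finsupp.single_apply]

lemma halfCentroid_ne_neg (i : Fin n) : halfCentroid e ≠ -e i := by
  intro h
  have hi : e.repr (halfCentroid e) i = e.repr (-e i) i := by rw [h]
  have : (0 : ℝ) ≤ 1 / (2 * n) := by positivity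
  simp only [repr_halfCentroid, map_neg, Finsupp.coe_neg, Pi.neg_apply, Module.Basis.repr_self,
    Finsupp.single_eq_same] at hi
  linarith

noncomputable def pointsK : Finset V :=
  cons (-halfCentroid e) (univ.map ⟨e, e.injective⟩) <| by
    simp only [mem_map, mem_univ, true_and, Function.Embedding.coeFn_mk, not_exists]
    exact fun i hi => halfCentroid_ne_neg e i (neg_eq_iff_eq_neg.1 hi.symm)

noncomputable def pointsL : Finset V :=
  cons (halfCentroid e)
    ((univ.filter fun i : Fin n => d ≤ (i : ℕ)).map ⟨fun i => -e i, neg_injective.comp e.injective⟩)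
    <| by
      simp only [mem_map, Function.Embedding.coeFn_mk, not_exists, not_and]
      exact fun i _ hi => halfCentroid_ne_neg e i hi.symm

lemma coe_pointsK :
    (pointsK e : Set V) = Set.range (fun i => e i) ∪ {-(1 / (2 * n : ℝ)) • ∑ i, e i} := by
  rw [pointsK, coe_cons, coe_map, coe_univ, Set.image_univ, Set.insert_eq, Set.union_comm,
    halfCentroid, neg_smul]
  rfl

lemma coe_pointsL :
    (pointsL e d : Set V) =
      (fun i => -e i) '' {i | d ≤ (i : ℕ)} ∪ {(1 / (2 * n : ℝ)) • ∑ i, e i} := by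
  rw [pointsL, coe_cons, coe_map, coe_filter, Set.insert_eq, Set.union_comm, halfCentroid]
  simp

lemma card_pointsK : #(pointsK e) = n + 1 := by
  simp [pointsK]

lemma card_pointsL (hd : d ≤ n) : #(pointsL e d) = n - d + 1 := by
  rw [pointsL, card_cons, card_map, Fin.card_filter_le_val hd]

noncomputable def meetPoint : V :=
  (1 / (3 * n - d : ℝ)) • ∑ i ∈ univ.filter (fun i : Fin n => (i : ℕ) < d), e i

lemma repr_meetPoint (j : Fin n) :
    e.repr (meetPoint e d) j = if (j : ℕ) < d then 1 / (3 * n - d : ℝ) else 0 := by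
  simp [meetPoint, map_sum, Finsupp.single_apply]

lemma repr_smul_neg_halfCentroid_add_sum (μ : ℝ) (c : Fin n → ℝ) (j : Fin n) :
    e.repr (μ • -halfCentroid e + ∑ i, c i • e i) j = c j - μ / (2 * n) := by
  simp [map_sum, Finsupp.single_apply]
  ring

lemma repr_smul_halfCentroid_add_sum_neg (τ : ℝ) (c : Fin n → ℝ) (j : Fin n) :
    e.repr (τ • halfCentroid e + ∑ i ∈ univ.filter (fun i : Fin n => d ≤ (i : ℕ)), c i • -e i) j
      = τ / (2 * n) - if d ≤ (j : ℕ) then c j else 0 := by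
  simp [map_sum, Finsupp.single_apply]
  ring

lemma sum_repr_meetPoint (hd : d ≤ n) : ∑ j, e.repr (meetPoint e d) j = d / (3 * n - d) := by
  simp only [repr_meetPoint, sum_ite, sum_const, Fin.card_filter_val_lt,
    min_eq_right hd, nsmul_eq_mul]
  ring

variable {d} in
lemma lt_three_mul_sub (hn : 0 < n) (hd : d ≤ n) : (d : ℝ) < 3 * n - d := by
  have : (d : ℝ) ≤ n := by exact_mod_cast hd
  have : (0 : ℝ) < n := by exact_mod_cast hn
  linarith

variable {d} in
lemma three_mul_sub_pos (hn : 0 < n) (hd : d ≤ n) : (0 : ℝ) < 3 * n - d :=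
  d.cast_nonneg.trans_lt (lt_three_mul_sub hn hd)

lemma repr_meetPoint_nonneg (hn : 0 < n) (hd : d ≤ n) (j : Fin n) :
    0 ≤ e.repr (meetPoint e d) j := by
  rw [repr_meetPoint]
  split_ifs
  · exact (one_div_pos.2 (three_mul_sub_pos hn hd)).le
  · rfl

lemma pos_of_eq_meetPoint (hn : 0 < n) (hd : d ≤ n) {μ : ℝ} {c : Fin n → ℝ}
    (h1 : μ + ∑ i, c i = 1) (hu : μ • -halfCentroid e + ∑ i, c i • e i = meetPoint e d) :
    0 < μ ∧ ∀ i, 0 < c i := by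
  have hc : ∀ j, c j = e.repr (meetPoint e d) j + μ / (2 * n) := fun j => by
    linarith [repr_smul_neg_halfCentroid_add_sum e μ c j, congrArg (e.repr · j) hu]
  have hsum : ∑ i, c i = d / (3 * n - d) + μ / 2 := by
    simp only [hc, sum_add_distrib, sum_repr_meetPoint e d hd, sum_const, card_univ,
      Fintype.card_fin, nsmul_eq_mul]
    field_simp
  have hμ : 0 < μ := by
    have : (d : ℝ) / (3 * n - d) < 1 :=
      (div_lt_one (three_mul_sub_pos hn hd)).2 (lt_three_mul_sub hn hd)
    linarith
  refine ⟨hμ, fun i => ?_⟩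
  rw [hc]
  have := repr_meetPoint_nonneg e d hn hd i
  positivity

lemma eq_meetPoint_of_mem_span (hn : 0 < n) (hd : d ≤ n) {τ : ℝ} {c : Fin n → ℝ}
    (h1 : τ + ∑ i ∈ univ.filter (fun i : Fin n => d ≤ (i : ℕ)), c i = 1)
    (hU : τ • halfCentroid e + ∑ i ∈ univ.filter (fun i : Fin n => d ≤ (i : ℕ)), c i • -e i ∈
      Submodule.span ℝ (e '' {i | (i : ℕ) < d})) :
    τ • halfCentroid e + ∑ i ∈ univ.filter (fun i : Fin n => d ≤ (i : ℕ)), c i • -e i =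
      meetPoint e d ∧ 0 < τ ∧ ∀ i ∈ univ.filter (fun i : Fin n => d ≤ (i : ℕ)), 0 < c i := by
  set x := τ • halfCentroid e + ∑ i ∈ univ.filter (fun i : Fin n => d ≤ (i : ℕ)), c i • -e i
  have hc : ∀ j : Fin n, d ≤ (j : ℕ) → c j = τ / (2 * n) := fun j hj => by
    have h0 : e.repr x j = 0 :=
      Finsupp.notMem_support_iff.1 fun hj' => (e.mem_span_image.1 hU hj').not_ge hj
    have := repr_smul_halfCentroid_add_sum_neg e d τ c j
    rw [h0, if_pos hj] at this
    linarith
  have hτ : τ * (3 * n - d) = 2 * n := by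
    rw [sum_congr rfl fun j hj => hc j (mem_filter.1 hj).2, sum_const, Fin.card_filter_le_val hd,
      nsmul_eq_mul, Nat.cast_sub hd] at h1
    field_simp at h1
    linarith
  have hden := three_mul_sub_pos hn hd
  have hτ' : τ = 2 * n / (3 * n - d) := by rw [eq_div_iff hden.ne', hτ]
  refine ⟨e.repr.injective <| Finsupp.ext fun j => ?_, by rw [hτ']; positivity, fun i hi => ?_⟩
  · rw [repr_smul_halfCentroid_add_sum_neg, repr_meetPoint, hτ']
    split_ifs with hj hj' hj'
    · omega
    · rw [hc j hj, hτ']; ring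
    · rw [sub_zero]; field_simp
    · omega
  · rw [hc i (mem_filter.1 hi).2, hτ']
    positivity

lemma meetPoint_mem_convexHull_pointsK (hn : 0 < n) (hd : d ≤ n) :
    meetPoint e d ∈ convexHull ℝ (pointsK e : Set V) := by
  have hd' := lt_three_mul_sub hn hd
  set μ : ℝ := 2 * (3 * n - 2 * d) / (3 * (3 * n - d))
  set c : Fin n → ℝ := fun i => e.repr (meetPoint e d) i + μ / (2 * n)
  have hμ : 0 ≤ μ := div_nonneg (by linarith) (by linarith)
  have hu : μ • -halfCentroid e + ∑ i, c i • e i = meetPoint e d :=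
    e.repr.injective <| Finsupp.ext fun j => by rw [repr_smul_neg_halfCentroid_add_sum]; ring
  have h1 : μ + ∑ i, c i = 1 := by
    simp only [c, sum_add_distrib, sum_repr_meetPoint e d hd, sum_const, card_univ,
      Fintype.card_fin, nsmul_eq_mul, μ]
    have := (three_mul_sub_pos hn hd).ne'
    field_simp
    ring
  rw [← hu]
  refine add_sum_smul_mem_convexHull (mem_cons_self _ _)
    (fun i _ => mem_cons_of_mem (mem_map_of_mem _ (mem_univ i))) hμ
    (fun i _ => add_nonneg (repr_meetPoint_nonneg e d hn hd i) (by positivity)) h1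

lemma meetPoint_mem_convexHull_pointsL (hn : 0 < n) (hd : d ≤ n) :
    meetPoint e d ∈ convexHull ℝ (pointsL e d : Set V) := by
  have hden := three_mul_sub_pos hn hd
  set τ : ℝ := 2 * n / (3 * n - d)
  set c : Fin n → ℝ := fun _ => 1 / (3 * n - d)
  have hu : τ • halfCentroid e + ∑ i ∈ univ.filter (fun i : Fin n => d ≤ (i : ℕ)), c i • -e i =
      meetPoint e d := by
    refine e.repr.injective <| Finsupp.ext fun j => ?_
    rw [repr_smul_halfCentroid_add_sum_neg, repr_meetPoint]
    split_ifs with hj hj' <;> first | omega | simp only [τ, c]; field_simp [hden.ne']; ring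
  have h1 : τ + ∑ i ∈ univ.filter (fun i : Fin n => d ≤ (i : ℕ)), c i = 1 := by
    rw [sum_const, Fin.card_filter_le_val hd, nsmul_eq_mul, Nat.cast_sub hd, mul_one_div,
      ← add_div, div_eq_one_iff_eq hden.ne']
    ring
  rw [← hu]
  exact add_sum_smul_mem_convexHull (mem_cons_self _ _)
    (fun i hi => mem_cons_of_mem (mem_map_of_mem _ hi)) (by positivity)
    (fun i _ => by positivity) h1

lemma meetPoint_mem_span : meetPoint e d ∈ Submodule.span ℝ (e '' {i | (i : ℕ) < d}) :=
  Submodule.smul_mem _ _ <| Submodule.sum_mem _ fun i hi =>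
    Submodule.subset_span ⟨i, (mem_filter.1 hi).2, rfl⟩

lemma pos_of_sum_pointsK_eq_meetPoint (hn : 0 < n) (hd : d ≤ n) {w : V → ℝ}
    (h1 : ∑ y ∈ pointsK e, w y = 1) (hx : ∑ y ∈ pointsK e, w y • y = meetPoint e d) :
    ∀ y ∈ pointsK e, 0 < w y := by
  simp only [pointsK, sum_cons, sum_map, Function.Embedding.coeFn_mk] at h1 hx
  obtain ⟨hμ, hc⟩ := pos_of_eq_meetPoint e d hn hd h1 hx
  simp only [pointsK, mem_cons, mem_map, mem_univ, true_and, Function.Embedding.coeFn_mk]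
  rintro y (rfl | ⟨i, rfl⟩)
  exacts [hμ, hc i]

lemma sum_pointsL_eq_meetPoint_of_mem_span (hn : 0 < n) (hd : d ≤ n) {w : V → ℝ}
    (h1 : ∑ y ∈ pointsL e d, w y = 1)
    (hU : ∑ y ∈ pointsL e d, w y • y ∈ Submodule.span ℝ (e '' {i | (i : ℕ) < d})) :
    ∑ y ∈ pointsL e d, w y • y = meetPoint e d ∧ ∀ y ∈ pointsL e d, 0 < w y := by
  simp only [pointsL, sum_cons, sum_map, Function.Embedding.coeFn_mk] at h1 hU ⊢
  obtain ⟨hx, hτ, hc⟩ := eq_meetPoint_of_mem_span e d hn hd h1 hU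
  refine ⟨hx, ?_⟩
  simp only [mem_cons, mem_map, Function.Embedding.coeFn_mk]
  rintro y (rfl | ⟨i, hi, rfl⟩)
  exacts [hτ, hc i hi]

theorem convexHull_pointsK_inter_convexHull_pointsL_inter_span (hn : 0 < n) (hd : d ≤ n) :
    convexHull ℝ (pointsK e : Set V) ∩ convexHull ℝ (pointsL e d : Set V) ∩
      (Submodule.span ℝ (e '' {i | (i : ℕ) < d}) : Set V) = {meetPoint e d} := by
  ext x
  constructor
  · rintro ⟨⟨-, hxL⟩, hxU⟩
    obtain ⟨w, -, h1, rfl⟩ := mem_convexHull'.1 hxL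
    exact (sum_pointsL_eq_meetPoint_of_mem_span e d hn hd h1 hxU).1
  · rintro rfl
    exact ⟨⟨meetPoint_mem_convexHull_pointsK e d hn hd, meetPoint_mem_convexHull_pointsL e d hn hd⟩,
      meetPoint_mem_span e d⟩

theorem eq_pointsK_and_eq_pointsL_of_mem (hn : 0 < n) (hd : d ≤ n) {K' L' : Finset V} {x : V}
    (hK : K' ⊆ pointsK e) (hL : L' ⊆ pointsL e d)
    (hx : x ∈ convexHull ℝ (K' : Set V) ∩ convexHull ℝ (L' : Set V) ∩
      (Submodule.span ℝ (e '' {i | (i : ℕ) < d}) : Set V)) :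
    K' = pointsK e ∧ L' = pointsL e d := by
  obtain ⟨⟨hxK, hxL⟩, hxU⟩ := hx
  obtain ⟨w, -, h1, rfl⟩ := mem_convexHull'.1 (convexHull_mono (coe_subset.2 hL) hxL)
  have hxu := (sum_pointsL_eq_meetPoint_of_mem_span e d hn hd h1 hxU).1
  rw [hxu] at hxK hxL
  refine ⟨eq_of_mem_convexHull_of_weights_pos hK hxK fun w _ h1 hx =>
      pos_of_sum_pointsK_eq_meetPoint e d hn hd h1 hx,
    eq_of_mem_convexHull_of_weights_pos hL hxL fun w _ h1 hx =>
      (sum_pointsL_eq_meetPoint_of_mem_span e d hn hd h1 (hx ▸ meetPoint_mem_span e d)).2⟩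

end KirchbergerSharpness

open KirchbergerSharpness in
theorem stmt_7 {n : ℕ} (hn : 0 < n) (d : ℕ) (hd : d ≤ n)
    (e : Module.Basis (Fin n) ℝ (EuclideanSpace ℝ (Fin n)))
    (U : Submodule ℝ (EuclideanSpace ℝ (Fin n)))
    (hU : U = Submodule.span ℝ ((fun i => e i) '' {i | (i : ℕ) < d}))
    (K L : Set (EuclideanSpace ℝ (Fin n)))
    (hK : K = Set.range (fun i => e i) ∪ {-(1 / (2 * n : ℝ)) • ∑ i, e i})
    (hL : L = (fun i => -e i) '' {i | d ≤ (i : ℕ)} ∪ {(1 / (2 * n : ℝ)) • ∑ i, e i})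
    (u : EuclideanSpace ℝ (Fin n))
    (hu : u = (1 / (3 * n - d : ℝ)) • ∑ i ∈ Finset.univ.filter (fun i : Fin n => (i : ℕ) < d), e i) :
    convexHull ℝ K ∩ convexHull ℝ L ∩ (U : Set (EuclideanSpace ℝ (Fin n))) = {u} ∧
      ∀ (K' L' : Finset (EuclideanSpace ℝ (Fin n))), ↑K' ⊆ K → ↑L' ⊆ L →
        K'.card + L'.card < 2 * (n + 1) - d →
        convexHull ℝ (K' : Set (EuclideanSpace ℝ (Fin n))) ∩
          convexHull ℝ (L' : Set (EuclideanSpace ℝ (Fin n))) ∩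
          (U : Set (EuclideanSpace ℝ (Fin n))) = ∅ := by
  subst hU hK hL hu
  rw [← coe_pointsK, ← coe_pointsL]
  refine ⟨convexHull_pointsK_inter_convexHull_pointsL_inter_span e d hn hd,
    fun K' L' hK' hL' hcard => Set.eq_empty_of_forall_notMem fun x hx => ?_⟩
  obtain ⟨rfl, rfl⟩ :=
    eq_pointsK_and_eq_pointsL_of_mem e d hn hd (coe_subset.1 hK') (coe_subset.1 hL') hx
  rw [card_pointsK, card_pointsL e d hd] at hcard
  omega
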